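/- Let 𝒢 be a stochastic subgroup of the orthogonal group O(d²), i.e. a subgroup such that every R ∈ 𝒢 satisfies R_{ij} ≥ −1/d for all i, j and Rc = c. Then there exists a qplex Q such that RQ = Q for all R ∈ 𝒢; that is, 𝒢 is contained in the preservation group of some qplex. -/

import Mathlib

noncomputable section

/- Ambient space: ℝ^(d²) with the standard inner product. -/
abbrev V (d : ℕ) := EuclideanSpace ℝ (Fin (d^2))

/-- The standard inner product ⟨u, v⟩ = ∑ i, u i * v i. -/
def ip {d : ℕ} (u v : V d) : ℝ := inner ℝ u v

/-- The barycenter c, with all entries equal to 1/d². -/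
def cpt (d : ℕ) : V d := WithLp.toLp 2 (fun _ => 1/(d^2:ℝ))

/-- The hyperplane H = {u : ⟨u, c⟩ = 1/d²} of vectors whose entries sum to 1. -/
def Hs (d : ℕ) : Set (V d) := {u | ip u (cpt d) = 1/(d^2:ℝ)}

/-- The polar A* = {u ∈ H : ⟨u, v⟩ ≥ 1/(d(d+1)) for all v ∈ A}. -/
def polar (d : ℕ) (A : Set (V d)) : Set (V d) :=
  {u | u ∈ Hs d ∧ ∀ v ∈ A, 1/((d:ℝ)*((d:ℝ)+1)) ≤ ip u v}

/-- cc(A): the closed convex hull of A. -/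
def cc (d : ℕ) (A : Set (V d)) : Set (V d) := closure (convexHull ℝ A)

/-- The probability simplex Δ = {u ∈ H : u i ≥ 0 for all i}. -/
def probSimplex (d : ℕ) : Set (V d) := {u | u ∈ Hs d ∧ ∀ i, 0 ≤ u i}

/-- The basis distributions e_k, with e_k(i) = (δ_{ki} + 1/d)/(d+1). -/
def basisDist (d : ℕ) (k : Fin (d^2)) : V d :=
  WithLp.toLp 2 (fun i => ((if k = i then (1:ℝ) else 0) + 1/(d:ℝ)) / ((d:ℝ)+1))

/-- The basis simplex Δ_e: the convex hull of the basis distributions. -/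
def basisSimplex (d : ℕ) : Set (V d) := convexHull ℝ (Set.range (basisDist d))

/-- The out-ball B_o = {u ∈ H : ⟨u, u⟩ ≤ 2/(d(d+1))}. -/
def outBall (d : ℕ) : Set (V d) := {u | u ∈ Hs d ∧ ip u u ≤ 2/((d:ℝ)*((d:ℝ)+1))}

/-- The out-sphere S_o = {u ∈ H : ⟨u, u⟩ = 2/(d(d+1))}. -/
def outSphere (d : ℕ) : Set (V d) := {u | u ∈ Hs d ∧ ip u u = 2/((d:ℝ)*((d:ℝ)+1))}

/-- The in-ball B_i = {u ∈ H : ‖u − c‖² ≤ 1/(d²(d²−1))}. -/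
def inBall (d : ℕ) : Set (V d) :=
  {u | u ∈ Hs d ∧ ‖u - cpt d‖^2 ≤ 1/((d:ℝ)^2*((d:ℝ)^2-1))}

/-- The in-sphere S_i = {u ∈ H : ‖u − c‖² = 1/(d²(d²−1))}. -/
def inSphere (d : ℕ) : Set (V d) :=
  {u | u ∈ Hs d ∧ ‖u - cpt d‖^2 = 1/((d:ℝ)^2*((d:ℝ)^2-1))}

/-- The mid-ball B_m = {u ∈ H : ‖u − c‖² ≤ 1/(d²(d+1))}. -/
def midBall (d : ℕ) : Set (V d) :=
  {u | u ∈ Hs d ∧ ‖u - cpt d‖^2 ≤ 1/((d:ℝ)^2*((d:ℝ)+1))}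

/-- A germ: a subset of Δ whose pairwise inner products satisfy the
fundamental inequalities 1/(d(d+1)) ≤ ⟨p, s⟩ ≤ 2/(d(d+1)). -/
def IsGerm (d : ℕ) (G : Set (V d)) : Prop :=
  G ⊆ probSimplex d ∧
  ∀ p ∈ G, ∀ s ∈ G, 1/((d:ℝ)*((d:ℝ)+1)) ≤ ip p s ∧ ip p s ≤ 2/((d:ℝ)*((d:ℝ)+1))

/-- A qplex: a self-polar subset of Δ ∩ B_o. -/
def IsQplex (d : ℕ) (Q : Set (V d)) : Prop :=
  Q ⊆ probSimplex d ∩ outBall d ∧ Q = polar d Q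

/-- Action of a d²×d² matrix on a vector: (R u)(i) = ∑ j, R i j * u j. -/
def mvec (d : ℕ) (R : Matrix (Fin (d^2)) (Fin (d^2)) ℝ) (u : V d) : V d :=
  WithLp.toLp 2 (fun i => ∑ j, R i j * u j)

/-- A stochastic subgroup of O(d²): every element has all entries ≥ −1/d and
fixes the barycenter c. -/
def IsStochasticSubgroup (d : ℕ)
    (𝒢 : Subgroup (Matrix.orthogonalGroup (Fin (d^2)) ℝ)) : Prop :=
  ∀ R ∈ 𝒢,
    (∀ i j, -(1/(d:ℝ)) ≤ (R : Matrix (Fin (d^2)) (Fin (d^2)) ℝ) i j) ∧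
    mvec d (R : Matrix (Fin (d^2)) (Fin (d^2)) ℝ) (cpt d) = cpt d

/-!
A maximal `𝒢`-invariant germ `M` containing the in-ball and the `𝒢`-orbit of the basis
distributions exists by Zorn's lemma, and it suffices to show `M* ⊆ M`. Since `M` contains `Δ_e`
and the in-ball, every `u ∈ M*` lies in `Δ = Δ_e*` and in `B_o = B_i*`, and so does its orbit.
Write `x = u - c`. If `t ∈ [0, 1]` satisfies `t² ⟨x, T x⟩ ≥ -r_m²` for all `T ∈ 𝒢`, then `M`
together with the orbit of `c + t x` is still a germ, so `c + t x ∈ M` by maximality; pairing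
`u` with the orbit of `c + t x` then gives `t ⟨x, T x⟩ ≥ -r_m²`. Hence the closed set of scales
`t` with `t ⟨x, T x⟩ ≥ -r_m²` for all `T` is stable under `t ↦ √t` on `[0, 1]`; it contains a
small positive scale by Cauchy–Schwarz, hence contains `1`, and `u = c + x ∈ M`.
-/

abbrev Mat (d : ℕ) := Matrix (Fin (d^2)) (Fin (d^2)) ℝ

abbrev OG (d : ℕ) := Matrix.orthogonalGroup (Fin (d^2)) ℝ

/- Squared radii, about `c` inside `H`, of the in-, mid- and out-spheres. -/
def inRadSq (d : ℕ) : ℝ := 1 / ((d:ℝ)^2 * ((d:ℝ)^2 - 1))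

def midRadSq (d : ℕ) : ℝ := 1 / ((d:ℝ)^2 * ((d:ℝ) + 1))

def outRadSq (d : ℕ) : ℝ := ((d:ℝ) - 1) / ((d:ℝ)^2 * ((d:ℝ) + 1))

section Radii

variable {d : ℕ}

lemma midRadSq_pos (hd : d ≠ 0) : 0 < midRadSq d := by unfold midRadSq; positivity

lemma inRadSq_pos (hd : 2 ≤ d) : 0 < inRadSq d := by
  have : (2:ℝ) ≤ d := by exact_mod_cast hd
  have : 0 < (d:ℝ)^2 - 1 := by nlinarith
  unfold inRadSq
  positivity

/-- The in-ball and the out-ball are polar to each other. -/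
lemma inRadSq_mul_outRadSq (hd : 2 ≤ d) : inRadSq d * outRadSq d = midRadSq d ^ 2 := by
  have : (2:ℝ) ≤ d := by exact_mod_cast hd
  have : (d:ℝ)^2 - 1 ≠ 0 := by nlinarith
  have : (d:ℝ) - 1 ≠ 0 := by linarith
  unfold inRadSq outRadSq midRadSq
  field_simp
  ring

lemma inRadSq_le_outRadSq (hd : 2 ≤ d) : inRadSq d ≤ outRadSq d := by
  have : (2:ℝ) ≤ d := by exact_mod_cast hd
  have : 0 < (d:ℝ)^2 - 1 := by nlinarith
  unfold inRadSq outRadSq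
  rw [div_le_div_iff₀ (by positivity) (by positivity)]
  nlinarith [mul_nonneg (mul_nonneg (sq_nonneg (d:ℝ)) (by linarith : (0:ℝ) ≤ d + 1))
    (mul_nonneg (by linarith : (0:ℝ) ≤ d) (by linarith : (0:ℝ) ≤ d - 2))]

lemma lowerBound_eq (hd : d ≠ 0) : 1 / ((d:ℝ) * ((d:ℝ) + 1)) = 1 / (d:ℝ)^2 - midRadSq d := by
  have : (d:ℝ) ≠ 0 := Nat.cast_ne_zero.mpr hd
  unfold midRadSq
  field_simp
  ring

lemma upperBound_eq (hd : d ≠ 0) : 2 / ((d:ℝ) * ((d:ℝ) + 1)) = 1 / (d:ℝ)^2 + outRadSq d := by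
  have : (d:ℝ) ≠ 0 := Nat.cast_ne_zero.mpr hd
  unfold outRadSq
  field_simp
  ring

end Radii

section Hyperplane

variable {d : ℕ} {u v : V d}

lemma ip_apply : ip u v = ∑ i, u i * v i := by
  simp [ip, PiLp.inner_apply, mul_comm]

lemma ip_comm (u v : V d) : ip u v = ip v u := real_inner_comm v u

lemma ip_self (u : V d) : ip u u = ‖u‖^2 := real_inner_self_eq_norm_sq u

lemma ip_add_left (u v w : V d) : ip (u + v) w = ip u w + ip v w := inner_add_left u v w

lemma ip_sub_left (u v w : V d) : ip (u - v) w = ip u w - ip v w := inner_sub_left u v w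

lemma ip_sub_right (u v w : V d) : ip u (v - w) = ip u v - ip u w := inner_sub_right u v w

lemma ip_smul_left (t : ℝ) (u v : V d) : ip (t • u) v = t * ip u v := real_inner_smul_left u v t

lemma ip_smul_right (t : ℝ) (u v : V d) : ip u (t • v) = t * ip u v := real_inner_smul_right u v t

lemma ip_cpt_eq_sum (u : V d) : ip u (cpt d) = (∑ i, u i) / (d:ℝ)^2 := by
  simp [ip_apply, cpt, div_eq_mul_inv, Finset.sum_mul]

lemma mem_Hs_iff_sum (hd : d ≠ 0) : u ∈ Hs d ↔ ∑ i, u i = 1 := by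
  have : (d:ℝ)^2 ≠ 0 := by positivity
  simp only [Hs, Set.mem_ofPred_eq, ip_cpt_eq_sum, div_left_inj' this]

lemma cpt_mem_Hs (hd : d ≠ 0) : cpt d ∈ Hs d := by
  have : (d:ℝ)^2 ≠ 0 := by positivity
  rw [mem_Hs_iff_sum hd]
  simp only [cpt, one_div, Finset.sum_const, Finset.card_univ, Fintype.card_fin, nsmul_eq_mul,
    Nat.cast_pow]
  field_simp

lemma ip_sub_cpt_cpt (hd : d ≠ 0) (hu : u ∈ Hs d) : ip (u - cpt d) (cpt d) = 0 := by
  rw [ip_sub_left, hu, cpt_mem_Hs hd, sub_self]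

lemma ip_eq_add_ip_sub_cpt (hd : d ≠ 0) (hu : u ∈ Hs d) (hv : v ∈ Hs d) :
    ip u v = 1 / (d:ℝ)^2 + ip (u - cpt d) (v - cpt d) := by
  have hvc : ip (cpt d) v = 1 / (d:ℝ)^2 := by rw [ip_comm]; exact hv
  have e : ip (u - cpt d) (v - cpt d)
      = ip u v - ip u (cpt d) - ip (cpt d) v + ip (cpt d) (cpt d) := by
    rw [ip_sub_left, ip_sub_right, ip_sub_right]; ring
  rw [e, hu, hvc, cpt_mem_Hs hd]; ring

end Hyperplane

section Balls

variable {d : ℕ} {u v : V d}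

lemma mem_outBall_iff (hd : d ≠ 0) : u ∈ outBall d ↔ u ∈ Hs d ∧ ‖u - cpt d‖^2 ≤ outRadSq d := by
  refine and_congr_right fun hu => ?_
  rw [ip_eq_add_ip_sub_cpt hd hu hu, ip_self, upperBound_eq hd, add_le_add_iff_left]

lemma ip_le_of_mem_outBall (hu : u ∈ outBall d) (hv : v ∈ outBall d) :
    ip u v ≤ 2 / ((d:ℝ) * ((d:ℝ) + 1)) := by
  have hu' := hu.2
  have hv' := hv.2
  rw [ip_self] at hu' hv'
  have hcs : ip u v ≤ ‖u‖ * ‖v‖ := real_inner_le_norm u v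
  nlinarith [two_mul_le_add_sq ‖u‖ ‖v‖]

lemma le_ip_of_norm_sq_mul_le (hd : d ≠ 0) (hu : u ∈ Hs d) (hv : v ∈ Hs d)
    (h : ‖u - cpt d‖^2 * ‖v - cpt d‖^2 ≤ midRadSq d ^ 2) :
    1 / ((d:ℝ) * ((d:ℝ) + 1)) ≤ ip u v := by
  have hcs : -(‖u - cpt d‖ * ‖v - cpt d‖) ≤ ip (u - cpt d) (v - cpt d) :=
    neg_le_of_abs_le (abs_real_inner_le_norm _ _)
  rw [← mul_pow, pow_le_pow_iff_left₀ (by positivity) (midRadSq_pos hd).le two_ne_zero] at h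
  rw [ip_eq_add_ip_sub_cpt hd hu hv, lowerBound_eq hd]
  linarith

lemma le_ip_of_mem_inBall_of_mem_outBall (hd : 2 ≤ d) (hu : u ∈ inBall d)
    (hv : v ∈ outBall d) : 1 / ((d:ℝ) * ((d:ℝ) + 1)) ≤ ip u v := by
  obtain ⟨hvH, hv⟩ := (mem_outBall_iff (by omega)).1 hv
  refine le_ip_of_norm_sq_mul_le (by omega) hu.1 hvH ?_
  rw [← inRadSq_mul_outRadSq hd]
  exact mul_le_mul hu.2 hv (sq_nonneg _) (inRadSq_pos hd).le

lemma inBall_subset_outBall (hd : 2 ≤ d) : inBall d ⊆ outBall d := fun _ hu =>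
  (mem_outBall_iff (by omega)).2 ⟨hu.1, hu.2.trans (inRadSq_le_outRadSq hd)⟩

end Balls

section Action

variable {d : ℕ}

lemma mvec_eq_mulVec (A : Mat d) (u : V d) :
    mvec d A u = WithLp.toLp 2 (A.mulVec u.ofLp) := rfl

lemma mvec_mul (A B : Mat d) (u : V d) :
    mvec d (A * B) u = mvec d A (mvec d B u) := by
  simp only [mvec_eq_mulVec, Matrix.mulVec_mulVec]

lemma mvec_one (u : V d) : mvec d 1 u = u := by
  simp only [mvec_eq_mulVec, Matrix.one_mulVec]

lemma mvec_add (A : Mat d) (u v : V d) :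
    mvec d A (u + v) = mvec d A u + mvec d A v := by
  simp only [mvec_eq_mulVec, WithLp.ofLp_add, Matrix.mulVec_add, WithLp.toLp_add]

lemma mvec_sub (A : Mat d) (u v : V d) :
    mvec d A (u - v) = mvec d A u - mvec d A v := by
  simp only [mvec_eq_mulVec, WithLp.ofLp_sub, Matrix.mulVec_sub, WithLp.toLp_sub]

lemma mvec_smul (A : Mat d) (t : ℝ) (u : V d) :
    mvec d A (t • u) = t • mvec d A u := by
  simp only [mvec_eq_mulVec, WithLp.ofLp_smul, Matrix.mulVec_smul, WithLp.toLp_smul]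

lemma mvec_mvec (R S : OG d) (u : V d) : mvec d R (mvec d S u) = mvec d ↑(R * S) u :=
  (mvec_mul _ _ _).symm

lemma ip_mvec_left (R : OG d) (u v : V d) : ip (mvec d R u) v = ip u (mvec d ↑R⁻¹ v) := by
  simp only [ip_apply, mvec, Finset.sum_mul, Finset.mul_sum]
  rw [Finset.sum_comm]
  refine Finset.sum_congr rfl fun i _ => Finset.sum_congr rfl fun j _ => ?_
  rw [Matrix.UnitaryGroup.inv_val, Matrix.star_apply, star_trivial]
  ring

lemma ip_mvec_mvec (R : OG d) (u v : V d) : ip (mvec d R u) (mvec d R v) = ip u v := by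
  rw [ip_mvec_left, ← mvec_mul, Matrix.UnitaryGroup.inv_val, Matrix.UnitaryGroup.star_mul_self,
    mvec_one]

lemma norm_mvec (R : OG d) (u : V d) : ‖mvec d R u‖ = ‖u‖ := by
  rw [← sq_eq_sq₀ (norm_nonneg _) (norm_nonneg _), ← ip_self, ← ip_self, ip_mvec_mvec]

lemma neg_le_div_add_sq_mul_ip_mvec {r : ℝ} (hr : 0 < r) (R : OG d) (x : V d) :
    -r ≤ r / (r + ‖x‖ ^ 2) * ip x (mvec d R x) := by
  have hcs : -(‖x‖ * ‖mvec d R x‖) ≤ ip x (mvec d R x) :=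
    neg_le_of_abs_le (abs_real_inner_le_norm _ _)
  rw [norm_mvec, ← sq] at hcs
  have ht : r / (r + ‖x‖ ^ 2) * ‖x‖ ^ 2 ≤ r := by
    rw [div_mul_eq_mul_div, div_le_iff₀ (by positivity)]
    nlinarith [sq_nonneg ‖x‖]
  have : 0 ≤ r / (r + ‖x‖ ^ 2) := by positivity
  nlinarith

end Action

namespace IsStochasticSubgroup

variable {d : ℕ} {𝒢 : Subgroup (OG d)} {R : OG d}

lemma mvec_cpt (hst : IsStochasticSubgroup d 𝒢) (hR : R ∈ 𝒢) : mvec d R (cpt d) = cpt d :=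
  (hst R hR).2

lemma mvec_sub_cpt (hst : IsStochasticSubgroup d 𝒢) (hR : R ∈ 𝒢) (u : V d) :
    mvec d R u - cpt d = mvec d R (u - cpt d) := by
  rw [mvec_sub, hst.mvec_cpt hR]

lemma ip_mvec_cpt (hst : IsStochasticSubgroup d 𝒢) (hR : R ∈ 𝒢) (u : V d) :
    ip (mvec d R u) (cpt d) = ip u (cpt d) := by
  rw [ip_mvec_left, hst.mvec_cpt (inv_mem hR)]

lemma mvec_mem_Hs (hst : IsStochasticSubgroup d 𝒢) (hR : R ∈ 𝒢) {u : V d} (hu : u ∈ Hs d) :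
    mvec d R u ∈ Hs d :=
  (hst.ip_mvec_cpt hR u).trans hu

lemma norm_mvec_sub_cpt (hst : IsStochasticSubgroup d 𝒢) (hR : R ∈ 𝒢) (u : V d) :
    ‖mvec d R u - cpt d‖ = ‖u - cpt d‖ := by
  rw [hst.mvec_sub_cpt hR, norm_mvec]

lemma sum_apply (hst : IsStochasticSubgroup d 𝒢) (hd : d ≠ 0) (hR : R ∈ 𝒢) (i : Fin (d^2)) :
    ∑ j, (R : Mat d) i j = 1 := by
  have h := congrArg (fun w : V d => w i) (hst.mvec_cpt hR)
  have : (d:ℝ)^2 ≠ 0 := by positivity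
  simp only [mvec, cpt, PiLp.toLp_apply, ← Finset.sum_mul] at h
  field_simp at h
  exact h

end IsStochasticSubgroup

section Basis

variable {d : ℕ} {w : V d}

lemma ip_basisDist (hd : d ≠ 0) (hw : w ∈ Hs d) (k : Fin (d^2)) :
    ip (basisDist d k) w = (w k + 1 / (d:ℝ)) / ((d:ℝ) + 1) := by
  have hsum := (mem_Hs_iff_sum hd).1 hw
  have h : ∀ i, basisDist d k i * w i
      = (if k = i then w i else 0) / ((d:ℝ) + 1) + 1 / (d:ℝ) / ((d:ℝ) + 1) * w i := by
    intro i
    simp only [basisDist, PiLp.toLp_apply]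
    split_ifs <;> ring
  rw [ip_apply, Finset.sum_congr rfl fun i _ => h i, Finset.sum_add_distrib, ← Finset.sum_div,
    Finset.sum_ite_eq, if_pos (Finset.mem_univ k), ← Finset.mul_sum, hsum]
  ring

lemma le_ip_basisDist_iff (hd : d ≠ 0) (hw : w ∈ Hs d) (k : Fin (d^2)) :
    1 / ((d:ℝ) * ((d:ℝ) + 1)) ≤ ip (basisDist d k) w ↔ 0 ≤ w k := by
  have : (d:ℝ) ≠ 0 := Nat.cast_ne_zero.mpr hd
  rw [ip_basisDist hd hw, show 1 / ((d:ℝ) * ((d:ℝ) + 1)) = (0 + 1 / (d:ℝ)) / ((d:ℝ) + 1) by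
    field_simp; ring, div_le_div_iff_of_pos_right (by positivity), add_le_add_iff_right]

lemma basisDist_mem_Hs (hd : d ≠ 0) (k : Fin (d^2)) : basisDist d k ∈ Hs d := by
  have : (d:ℝ) ≠ 0 := Nat.cast_ne_zero.mpr hd
  rw [mem_Hs_iff_sum hd]
  simp only [basisDist, PiLp.toLp_apply, ← Finset.sum_div, Finset.sum_add_distrib,
    Finset.sum_ite_eq, Finset.mem_univ, if_true, Finset.sum_const, Finset.card_univ,
    Fintype.card_fin, nsmul_eq_mul]
  push_cast
  field_simp
  ring

lemma basisDist_mem_outBall (hd : d ≠ 0) (k : Fin (d^2)) : basisDist d k ∈ outBall d := by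
  have : (d:ℝ) ≠ 0 := Nat.cast_ne_zero.mpr hd
  refine ⟨basisDist_mem_Hs hd k, le_of_eq ?_⟩
  rw [ip_basisDist hd (basisDist_mem_Hs hd k)]
  simp only [basisDist, PiLp.toLp_apply, if_true]
  field_simp
  ring

lemma IsStochasticSubgroup.mvec_basisDist_apply {𝒢 : Subgroup (OG d)}
    (hst : IsStochasticSubgroup d 𝒢) (hd : d ≠ 0) {R : OG d} (hR : R ∈ 𝒢) (k i : Fin (d^2)) :
    mvec d R (basisDist d k) i = ((R : Mat d) i k + 1 / (d:ℝ)) / ((d:ℝ) + 1) := by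
  have h : ∀ j, (R : Mat d) i j * basisDist d k j
      = (if k = j then (R : Mat d) i j else 0) / ((d:ℝ) + 1)
        + 1 / (d:ℝ) / ((d:ℝ) + 1) * (R : Mat d) i j := by
    intro j
    simp only [basisDist, PiLp.toLp_apply]
    split_ifs <;> ring
  simp only [mvec, PiLp.toLp_apply]
  rw [Finset.sum_congr rfl fun j _ => h j, Finset.sum_add_distrib, ← Finset.sum_div,
    Finset.sum_ite_eq, if_pos (Finset.mem_univ k), ← Finset.mul_sum, hst.sum_apply hd hR]
  ring

lemma IsStochasticSubgroup.mvec_basisDist_mem_probSimplex {𝒢 : Subgroup (OG d)}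
    (hst : IsStochasticSubgroup d 𝒢) (hd : d ≠ 0) {R : OG d} (hR : R ∈ 𝒢) (k : Fin (d^2)) :
    mvec d R (basisDist d k) ∈ probSimplex d := by
  refine ⟨hst.mvec_mem_Hs hR (basisDist_mem_Hs hd k), fun i => ?_⟩
  rw [hst.mvec_basisDist_apply hd hR]
  have := (hst R hR).1 i k
  exact div_nonneg (by linarith) (by positivity)

lemma IsStochasticSubgroup.mvec_basisDist_mem_outBall {𝒢 : Subgroup (OG d)}
    (hst : IsStochasticSubgroup d 𝒢) (hd : d ≠ 0) {R : OG d} (hR : R ∈ 𝒢) (k : Fin (d^2)) :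
    mvec d R (basisDist d k) ∈ outBall d := by
  obtain ⟨hH, hk⟩ := (mem_outBall_iff hd).1 (basisDist_mem_outBall hd k)
  exact (mem_outBall_iff hd).2 ⟨hst.mvec_mem_Hs hR hH, by rwa [hst.norm_mvec_sub_cpt hR]⟩

end Basis

section Germs

variable {d : ℕ} {A B : Set (V d)}

lemma isGerm_of_forall_le_ip (hA : A ⊆ probSimplex d ∩ outBall d)
    (hlow : ∀ p ∈ A, ∀ q ∈ A, 1 / ((d:ℝ) * ((d:ℝ) + 1)) ≤ ip p q) : IsGerm d A :=
  ⟨fun _ hp => (hA hp).1,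
    fun p hp q hq => ⟨hlow p hp q hq, ip_le_of_mem_outBall (hA hp).2 (hA hq).2⟩⟩

lemma IsGerm.subset_inter_outBall (hA : IsGerm d A) : A ⊆ probSimplex d ∩ outBall d :=
  fun p hp => ⟨hA.1 hp, (hA.1 hp).1, (hA.2 p hp p hp).2⟩

lemma IsGerm.subset_polar (hA : IsGerm d A) : A ⊆ polar d A :=
  fun p hp => ⟨(hA.1 hp).1, fun q hq => (hA.2 p hp q hq).1⟩

lemma IsGerm.union (hA : IsGerm d A) (hB : IsGerm d B)
    (hAB : ∀ a ∈ A, ∀ b ∈ B, 1 / ((d:ℝ) * ((d:ℝ) + 1)) ≤ ip a b) : IsGerm d (A ∪ B) := by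
  refine isGerm_of_forall_le_ip
    (Set.union_subset hA.subset_inter_outBall hB.subset_inter_outBall) ?_
  rintro p (hp | hp) q (hq | hq)
  · exact (hA.2 p hp q hq).1
  · exact hAB p hp q hq
  · rw [ip_comm]
    exact hAB q hq p hp
  · exact (hB.2 p hp q hq).1

lemma inBall_subset_probSimplex (hd : 2 ≤ d) : inBall d ⊆ probSimplex d := fun u hu =>
  ⟨hu.1, fun k => (le_ip_basisDist_iff (by omega) hu.1 k).1 <| by
    rw [ip_comm]
    exact le_ip_of_mem_inBall_of_mem_outBall hd hu (basisDist_mem_outBall (by omega) k)⟩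

lemma isGerm_inBall (hd : 2 ≤ d) : IsGerm d (inBall d) :=
  isGerm_of_forall_le_ip
    (fun _ hu => ⟨inBall_subset_probSimplex hd hu, inBall_subset_outBall hd hu⟩)
    fun _ hp _ hq => le_ip_of_mem_inBall_of_mem_outBall hd hp (inBall_subset_outBall hd hq)

end Germs

section Orbits

variable {d : ℕ} {𝒢 : Subgroup (OG d)} {A B : Set (V d)} {R : OG d}

def orbit (𝒢 : Subgroup (OG d)) (A : Set (V d)) : Set (V d) :=
  {z | ∃ R ∈ 𝒢, ∃ a ∈ A, mvec d R a = z}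

def Preserves (𝒢 : Subgroup (OG d)) (A : Set (V d)) : Prop :=
  ∀ R ∈ 𝒢, ∀ u ∈ A, mvec d R u ∈ A

lemma subset_orbit : A ⊆ orbit 𝒢 A := fun a ha => ⟨1, one_mem 𝒢, a, ha, mvec_one a⟩

lemma preserves_orbit : Preserves 𝒢 (orbit 𝒢 A) := by
  rintro R hR _ ⟨S, hS, a, ha, rfl⟩
  exact ⟨R * S, mul_mem hR hS, a, ha, (mvec_mvec R S a).symm⟩

lemma Preserves.union (hA : Preserves 𝒢 A) (hB : Preserves 𝒢 B) : Preserves 𝒢 (A ∪ B) :=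
  fun R hR _ hu => hu.imp (hA R hR _) (hB R hR _)

lemma Preserves.image_eq (hA : Preserves 𝒢 A) (hR : R ∈ 𝒢) : mvec d R '' A = A := by
  refine (Set.image_subset_iff.2 fun u hu => hA R hR u hu).antisymm fun u hu =>
    ⟨mvec d ↑R⁻¹ u, hA _ (inv_mem hR) u hu, ?_⟩
  rw [← mvec_mul, Matrix.UnitaryGroup.inv_val, Unitary.mul_star_self_of_mem R.2, mvec_one]

lemma Preserves.mvec_mem_polar (hst : IsStochasticSubgroup d 𝒢) (hA : Preserves 𝒢 A)
    (hR : R ∈ 𝒢) {u : V d} (hu : u ∈ polar d A) : mvec d R u ∈ polar d A :=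
  ⟨hst.mvec_mem_Hs hR hu.1, fun v hv => by
    rw [ip_mvec_left]
    exact hu.2 _ (hA _ (inv_mem hR) v hv)⟩

lemma IsStochasticSubgroup.preserves_inBall (hst : IsStochasticSubgroup d 𝒢) :
    Preserves 𝒢 (inBall d) :=
  fun R hR _ hu => ⟨hst.mvec_mem_Hs hR hu.1, by rw [hst.norm_mvec_sub_cpt hR]; exact hu.2⟩

lemma IsStochasticSubgroup.isGerm_orbit_basisDist (hst : IsStochasticSubgroup d 𝒢)
    (hd : d ≠ 0) : IsGerm d (orbit 𝒢 (Set.range (basisDist d))) := by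
  refine isGerm_of_forall_le_ip ?_ ?_
  · rintro _ ⟨R, hR, _, ⟨k, rfl⟩, rfl⟩
    exact ⟨hst.mvec_basisDist_mem_probSimplex hd hR k, hst.mvec_basisDist_mem_outBall hd hR k⟩
  · rintro _ ⟨R, hR, _, ⟨j, rfl⟩, rfl⟩ _ ⟨S, hS, _, ⟨k, rfl⟩, rfl⟩
    have hT := mul_mem (inv_mem hR) hS
    rw [ip_mvec_left, mvec_mvec,
      le_ip_basisDist_iff hd (hst.mvec_mem_Hs hT (basisDist_mem_Hs hd k))]
    exact (hst.mvec_basisDist_mem_probSimplex hd hT k).2 j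

end Orbits

section Shift

variable {d : ℕ} {p v : V d} {t : ℝ}

lemma shift_mem_Hs (hd : d ≠ 0) (hv : v ∈ Hs d) (t : ℝ) : cpt d + t • (v - cpt d) ∈ Hs d := by
  show ip _ _ = _
  rw [ip_add_left, ip_smul_left, ip_sub_cpt_cpt hd hv, cpt_mem_Hs hd]
  simp

lemma shift_mem_probSimplex (hd : d ≠ 0) (hv : v ∈ probSimplex d) (ht0 : 0 ≤ t) (ht1 : t ≤ 1) :
    cpt d + t • (v - cpt d) ∈ probSimplex d := by
  refine ⟨shift_mem_Hs hd hv.1 t, fun i => ?_⟩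
  have hvi := hv.2 i
  have : (0:ℝ) ≤ 1 / (d:ℝ)^2 := by positivity
  simp only [cpt, PiLp.add_apply, PiLp.smul_apply, PiLp.sub_apply, smul_eq_mul]
  nlinarith

lemma shift_mem_outBall (hd : d ≠ 0) (hv : v ∈ outBall d) (ht0 : 0 ≤ t) (ht1 : t ≤ 1) :
    cpt d + t • (v - cpt d) ∈ outBall d := by
  obtain ⟨hvH, hv⟩ := (mem_outBall_iff hd).1 hv
  refine (mem_outBall_iff hd).2 ⟨shift_mem_Hs hd hvH t, ?_⟩
  rw [add_sub_cancel_left, norm_smul, mul_pow, Real.norm_eq_abs, sq_abs]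
  have : t ^ 2 ≤ 1 := pow_le_one₀ ht0 ht1
  nlinarith [sq_nonneg ‖v - cpt d‖]

lemma le_ip_shift (hd : d ≠ 0) (hp : p ∈ Hs d) (hv : v ∈ Hs d)
    (hpv : 1 / ((d:ℝ) * ((d:ℝ) + 1)) ≤ ip p v) (ht0 : 0 ≤ t) (ht1 : t ≤ 1) :
    1 / ((d:ℝ) * ((d:ℝ) + 1)) ≤ ip p (cpt d + t • (v - cpt d)) := by
  rw [ip_eq_add_ip_sub_cpt hd hp hv, lowerBound_eq hd] at hpv
  rw [ip_eq_add_ip_sub_cpt hd hp (shift_mem_Hs hd hv t), add_sub_cancel_left,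
    ip_smul_right, lowerBound_eq hd]
  nlinarith [midRadSq_pos hd]

lemma IsStochasticSubgroup.mvec_shift {𝒢 : Subgroup (OG d)} (hst : IsStochasticSubgroup d 𝒢)
    {R : OG d} (hR : R ∈ 𝒢) (v : V d) (t : ℝ) :
    mvec d R (cpt d + t • (v - cpt d)) = cpt d + t • (mvec d R v - cpt d) := by
  rw [mvec_add, mvec_smul, hst.mvec_cpt hR, hst.mvec_sub_cpt hR]

end Shift

section Polar

variable {d : ℕ} {A : Set (V d)} {u : V d}

lemma mem_probSimplex_of_mem_polar (hd : d ≠ 0) (hA : Set.range (basisDist d) ⊆ A)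
    (hu : u ∈ polar d A) : u ∈ probSimplex d :=
  ⟨hu.1, fun k => (le_ip_basisDist_iff hd hu.1 k).1 <| by
    rw [ip_comm]
    exact hu.2 _ (hA ⟨k, rfl⟩)⟩

lemma mem_outBall_of_mem_polar (hd : 2 ≤ d) (hA : inBall d ⊆ A) (hu : u ∈ polar d A) :
    u ∈ outBall d := by
  have hd0 : d ≠ 0 := by omega
  have hri := inRadSq_pos hd
  refine (mem_outBall_iff hd0).2 ⟨hu.1, ?_⟩
  set x := u - cpt d
  rcases eq_or_ne ‖x‖ 0 with hx | hx
  · rw [hx, sq, zero_mul]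
    exact (hri.trans_le (inRadSq_le_outRadSq hd)).le
  -- test `u` against the point of the in-sphere opposite to `u`
  set s := √(inRadSq d) / ‖x‖
  have hs : s * ‖x‖ = √(inRadSq d) := div_mul_cancel₀ _ hx
  have hm : cpt d + (-s) • x ∈ inBall d := by
    refine ⟨shift_mem_Hs hd0 hu.1 _, ?_⟩
    show _ ≤ inRadSq d
    rw [add_sub_cancel_left, norm_smul, norm_neg, Real.norm_eq_abs,
      abs_of_nonneg (by positivity), hs, Real.sq_sqrt hri.le]
  have hlow := hu.2 _ (hA hm)
  have hip : ip x ((-s) • x) = -s * ‖x‖ ^ 2 := by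
    rw [ip_smul_right, ip_self]
  rw [ip_eq_add_ip_sub_cpt hd0 hu.1 hm.1, lowerBound_eq hd0, add_sub_cancel_left, hip] at hlow
  have key : √(inRadSq d) * ‖x‖ ≤ midRadSq d := by
    rw [← hs]
    nlinarith
  have := pow_le_pow_left₀ (by positivity) key 2
  rw [mul_pow, Real.sq_sqrt hri.le, ← inRadSq_mul_outRadSq hd] at this
  exact le_of_mul_le_mul_left this hri

end Polar

lemma one_mem_of_sq_mem_imp_mem {s : Set ℝ} (hs : IsClosed s) {t₀ : ℝ} (ht₀ : t₀ ∈ s)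
    (h0 : 0 < t₀) (h1 : t₀ ≤ 1) (hsq : ∀ t, 0 ≤ t → t ≤ 1 → t ^ 2 ∈ s → t ∈ s) : (1:ℝ) ∈ s := by
  have hbdd : BddAbove (s ∩ Set.Icc 0 1) := ⟨1, fun _ ht => ht.2.2⟩
  have ht₀' : t₀ ∈ s ∩ Set.Icc 0 1 := ⟨ht₀, h0.le, h1⟩
  obtain ⟨hτs, hτ0, hτ1⟩ := (hs.inter isClosed_Icc).csSup_mem ⟨t₀, ht₀'⟩ hbdd
  set τ := sSup (s ∩ Set.Icc 0 1)
  rcases hτ1.lt_or_eq with hlt | heq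
  · have hτ : τ < √τ := Real.lt_sqrt_self_iff.2 ⟨(h0.trans_le (le_csSup hbdd ht₀')).ne', hlt⟩
    have hsqrt : √τ ∈ s ∩ Set.Icc 0 1 := ⟨hsq _ (Real.sqrt_nonneg _) (Real.sqrt_le_one.2 hτ1)
      (by rwa [Real.sq_sqrt hτ0]), Real.sqrt_nonneg _, Real.sqrt_le_one.2 hτ1⟩
    exact absurd (le_csSup hbdd hsqrt) hτ.not_ge
  · rwa [← heq]

section Maximal

variable {d : ℕ} {𝒢 : Subgroup (OG d)} {M : Set (V d)} {u : V d} {t : ℝ}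

def seed (d : ℕ) (𝒢 : Subgroup (OG d)) : Set (V d) :=
  inBall d ∪ orbit 𝒢 (Set.range (basisDist d))

def invariantGerms (d : ℕ) (𝒢 : Subgroup (OG d)) : Set (Set (V d)) :=
  {M | IsGerm d M ∧ seed d 𝒢 ⊆ M ∧ Preserves 𝒢 M}

lemma IsStochasticSubgroup.seed_mem_invariantGerms (hst : IsStochasticSubgroup d 𝒢)
    (hd : 2 ≤ d) : seed d 𝒢 ∈ invariantGerms d 𝒢 := by
  have hd0 : d ≠ 0 := by omega
  refine ⟨(isGerm_inBall hd).union (hst.isGerm_orbit_basisDist hd0) fun a ha b hb => ?_,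
    subset_rfl, hst.preserves_inBall.union preserves_orbit⟩
  exact le_ip_of_mem_inBall_of_mem_outBall hd ha
    ((hst.isGerm_orbit_basisDist hd0).subset_inter_outBall hb).2

lemma IsStochasticSubgroup.exists_maximal_invariantGerm (hst : IsStochasticSubgroup d 𝒢)
    (hd : 2 ≤ d) : ∃ M, Maximal (· ∈ invariantGerms d 𝒢) M := by
  refine (zorn_subset_nonempty _ ?_ _ (hst.seed_mem_invariantGerms hd)).imp fun _ hM => hM.2
  rintro C hC hchain ⟨M₀, hM₀⟩
  refine ⟨⋃₀ C, ⟨⟨?_, ?_⟩, (hC hM₀).2.1.trans (Set.subset_sUnion_of_mem hM₀), ?_⟩,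
    fun _ => Set.subset_sUnion_of_mem⟩
  · rintro p ⟨A, hA, hp⟩
    exact (hC hA).1.1 hp
  · rintro p ⟨A, hA, hp⟩ q ⟨B, hB, hq⟩
    rcases hchain.total hA hB with h | h
    · exact (hC hB).1.2 p (h hp) q hq
    · exact (hC hA).1.2 p hp q (h hq)
  · rintro R hR p ⟨A, hA, hp⟩
    exact ⟨A, hA, (hC hA).2.2 R hR p hp⟩

lemma mvec_mem_inter_of_mem_polar (hd : 2 ≤ d) (hst : IsStochasticSubgroup d 𝒢)
    (hM : M ∈ invariantGerms d 𝒢) {R : OG d} (hR : R ∈ 𝒢) (hu : u ∈ polar d M) :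
    mvec d R u ∈ probSimplex d ∩ outBall d := by
  have hRu := hM.2.2.mvec_mem_polar hst hR hu
  exact ⟨mem_probSimplex_of_mem_polar (by omega)
      ((subset_orbit.trans Set.subset_union_right).trans hM.2.1) hRu,
    mem_outBall_of_mem_polar hd (Set.subset_union_left.trans hM.2.1) hRu⟩

lemma isGerm_orbit_shift (hd : 2 ≤ d) (hst : IsStochasticSubgroup d 𝒢)
    (hM : M ∈ invariantGerms d 𝒢) (hu : u ∈ polar d M) (ht0 : 0 ≤ t) (ht1 : t ≤ 1)
    (hP : ∀ T ∈ 𝒢, -midRadSq d ≤ t ^ 2 * ip (u - cpt d) (mvec d T (u - cpt d))) :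
    IsGerm d (orbit 𝒢 {cpt d + t • (u - cpt d)}) := by
  have hd0 : d ≠ 0 := by omega
  refine isGerm_of_forall_le_ip ?_ ?_
  · rintro _ ⟨R, hR, _, rfl, rfl⟩
    obtain ⟨h1, h2⟩ := mvec_mem_inter_of_mem_polar hd hst hM hR hu
    rw [hst.mvec_shift hR]
    exact ⟨shift_mem_probSimplex hd0 h1 ht0 ht1, shift_mem_outBall hd0 h2 ht0 ht1⟩
  · rintro _ ⟨R, hR, _, rfl, rfl⟩ _ ⟨S, hS, _, rfl, rfl⟩
    have hT := mul_mem (inv_mem hR) hS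
    rw [ip_mvec_left, mvec_mvec, hst.mvec_shift hT, ip_eq_add_ip_sub_cpt hd0
      (shift_mem_Hs hd0 hu.1 t) (shift_mem_Hs hd0 (hst.mvec_mem_Hs hT hu.1) t),
      add_sub_cancel_left, add_sub_cancel_left, ip_smul_left, ip_smul_right,
      hst.mvec_sub_cpt hT, lowerBound_eq hd0]
    nlinarith [hP _ hT]

lemma le_ip_orbit_shift (hd : 2 ≤ d) (hst : IsStochasticSubgroup d 𝒢)
    (hM : M ∈ invariantGerms d 𝒢) (hu : u ∈ polar d M) (ht0 : 0 ≤ t) (ht1 : t ≤ 1) :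
    ∀ p ∈ M, ∀ z ∈ orbit 𝒢 {cpt d + t • (u - cpt d)}, 1 / ((d:ℝ) * ((d:ℝ) + 1)) ≤ ip p z := by
  rintro p hp _ ⟨R, hR, _, rfl, rfl⟩
  have hRu := hM.2.2.mvec_mem_polar hst hR hu
  rw [hst.mvec_shift hR]
  exact le_ip_shift (by omega) (hM.1.1 hp).1 hRu.1 (by rw [ip_comm]; exact hRu.2 p hp) ht0 ht1

lemma shift_mem_of_maximal (hd : 2 ≤ d) (hst : IsStochasticSubgroup d 𝒢)
    (hMax : Maximal (· ∈ invariantGerms d 𝒢) M) (hu : u ∈ polar d M) (ht0 : 0 ≤ t) (ht1 : t ≤ 1)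
    (hP : ∀ T ∈ 𝒢, -midRadSq d ≤ t ^ 2 * ip (u - cpt d) (mvec d T (u - cpt d))) :
    cpt d + t • (u - cpt d) ∈ M := by
  have hM := hMax.prop
  have hU : M ∪ orbit 𝒢 {cpt d + t • (u - cpt d)} ∈ invariantGerms d 𝒢 :=
    ⟨hM.1.union (isGerm_orbit_shift hd hst hM hu ht0 ht1 hP)
      (le_ip_orbit_shift hd hst hM hu ht0 ht1),
      hM.2.1.trans Set.subset_union_left, hM.2.2.union preserves_orbit⟩
  exact hMax.2 hU Set.subset_union_left (Or.inr (subset_orbit rfl))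

lemma polar_subset_of_maximal (hd : 2 ≤ d) (hst : IsStochasticSubgroup d 𝒢)
    (hMax : Maximal (· ∈ invariantGerms d 𝒢) M) : polar d M ⊆ M := by
  intro u hu
  have hd0 : d ≠ 0 := by omega
  set x := u - cpt d
  set s : Set ℝ := {t | ∀ T ∈ 𝒢, -midRadSq d ≤ t * ip x (mvec d T x)}
  have hclosed : IsClosed s := by
    simp only [s, Set.ofPred_forall]
    exact isClosed_iInter fun T => isClosed_iInter fun _ =>
      isClosed_le continuous_const (continuous_id.mul continuous_const)
  have hsq : ∀ t, 0 ≤ t → t ≤ 1 → t ^ 2 ∈ s → t ∈ s := by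
    intro t ht0 ht1 ht T hT
    have hlow := hu.2 _ (hMax.prop.2.2 T hT _ (shift_mem_of_maximal hd hst hMax hu ht0 ht1 ht))
    rw [hst.mvec_shift hT, ip_eq_add_ip_sub_cpt hd0 hu.1
      (shift_mem_Hs hd0 (hst.mvec_mem_Hs hT hu.1) t), add_sub_cancel_left,
      ip_smul_right, hst.mvec_sub_cpt hT, lowerBound_eq hd0] at hlow
    linarith
  have hrm := midRadSq_pos hd0
  have ht₀ : midRadSq d / (midRadSq d + ‖x‖ ^ 2) ∈ s := fun T _ =>
    neg_le_div_add_sq_mul_ip_mvec hrm T x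
  have h1 := one_mem_of_sq_mem_imp_mem hclosed ht₀ (by positivity)
    (div_le_one_of_le₀ (le_add_of_nonneg_right (sq_nonneg _)) (by positivity)) hsq
  have hu' := shift_mem_of_maximal hd hst hMax hu zero_le_one le_rfl
    fun T hT => by rw [one_pow]; exact h1 T hT
  rwa [one_smul, add_sub_cancel] at hu'

end Maximal

/-- every stochastic subgroup of O(d²) is contained in the
preservation group of some qplex. -/
theorem statement17 (d : ℕ) (hd : 2 ≤ d)
    (𝒢 : Subgroup (Matrix.orthogonalGroup (Fin (d^2)) ℝ))
    (hst : IsStochasticSubgroup d 𝒢) :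
    ∃ Q : Set (V d), IsQplex d Q ∧
      ∀ R ∈ 𝒢, mvec d (R : Matrix (Fin (d^2)) (Fin (d^2)) ℝ) '' Q = Q := by
  obtain ⟨M, hMax⟩ := hst.exists_maximal_invariantGerm hd
  obtain ⟨hgerm, -, hpres⟩ := hMax.prop
  exact ⟨M, ⟨hgerm.subset_inter_outBall,
    hgerm.subset_polar.antisymm (polar_subset_of_maximal hd hst hMax)⟩,
    fun R hR => hpres.image_eq hR⟩
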